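/- arXiv:1603.09173 — 5 statements merged into one kernel-verified Lean document; each statement's English description precedes it below -/
import Mathlib

section
/- Let A be a finite nonempty set, X the simplex in ℝ^A, g a continuous map assigning to each x ∈ X a symmetric positive-definite matrix g(x), and v : X → ℝ^A continuous. For each x ∈ X let V(x) be the g(x)-projection of g(x)⁻¹ v(x) onto the tangent cone TC_X(x). Then the speed function x ↦ ‖V(x)‖_{g(x)} is lower semicontinuous on X; equivalently, it equals the maximum of ⟨g(x)⁻¹ v(x), z⟩_{g(x)} over all z ∈ TC_X(x) with ‖z‖_{g(x)} ≤ 1, and this maximum is lower semicontinuous in x. -/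
/-!
For a convex cone `C`, the `G`-projection `V` of `w` onto `C` satisfies `⟨w, V⟩_G = ‖V‖_G²` and
`⟨w, z⟩_G ≤ ‖V‖_G ‖z‖_G` for `z ∈ C`, and `⟨g(y)⁻¹ v(y), z⟩_{g(y)} = v(y) ⬝ z`. Since
`TC_X(x) ⊆ TC_X(y)` for `y` near `x`, the continuous function `y ↦ v(y) ⬝ V(x) / ‖V(x)‖_{g(y)}`
lies below the speed near `x` and equals it at `x` (when `V(x) ≠ 0`).
-/

open Matrix

noncomputable section

/-- The tangent cone `TC_X(x)` of the simplex at `x`. -/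
def tcone {A : Type*} [Fintype A] (x : A → ℝ) : Set (A → ℝ) :=
  {z | (∑ α, z α) = 0 ∧ ∀ α, x α = 0 → 0 ≤ z α}

/-- The quadratic form `wᵀ G w = ‖w‖_G²` associated to a matrix `G`. -/
def qform {A : Type*} [Fintype A] (G : Matrix A A ℝ) (w : A → ℝ) : ℝ :=
  w ⬝ᵥ G.mulVec w

/-- `V` is the `G`-projection of `w` onto `C`. -/
def IsGProj {A : Type*} [Fintype A] (G : Matrix A A ℝ) (C : Set (A → ℝ))
    (w V : A → ℝ) : Prop :=
  V ∈ C ∧ ∀ z ∈ C, qform G (w - V) ≤ qform G (w - z)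

open Filter Topology

section ProjectionOntoCone

variable {F : Type*} [NormedAddCommGroup F] [InnerProductSpace ℝ F] {C : Set F} {w p : F}

theorem inner_sub_proj_sub_le_zero (hC : Convex ℝ C) (hp : p ∈ C)
    (hmin : ∀ z ∈ C, ‖w - p‖ ≤ ‖w - z‖) {z : F} (hz : z ∈ C) : inner ℝ (w - p) (z - p) ≤ 0 := by
  have : Nonempty C := ⟨⟨p, hp⟩⟩
  refine (norm_eq_iInf_iff_real_inner_le_zero hC hp).1 ?_ z hz
  exact le_antisymm (le_ciInf fun z => hmin z z.2)
    (ciInf_le ⟨0, Set.forall_mem_range.2 fun _ => norm_nonneg _⟩ (⟨p, hp⟩ : C))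

variable (hC : Convex ℝ C) (hcone : ∀ z ∈ C, ∀ t : ℝ, 0 ≤ t → t • z ∈ C) (hp : p ∈ C)
  (hmin : ∀ z ∈ C, ‖w - p‖ ≤ ‖w - z‖)
include hC hcone hp hmin

theorem inner_sub_proj_proj_eq_zero : inner ℝ (w - p) p = 0 := by
  have h₀ := inner_sub_proj_sub_le_zero hC hp hmin (by simpa using hcone p hp 0 le_rfl)
  have h₂ := inner_sub_proj_sub_le_zero hC hp hmin (hcone p hp 2 zero_le_two)
  rw [zero_sub, inner_neg_right] at h₀
  rw [two_smul, add_sub_cancel_right] at h₂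
  linarith

theorem inner_proj_eq_norm_sq : inner ℝ w p = ‖p‖ ^ 2 := by
  have := inner_sub_proj_proj_eq_zero hC hcone hp hmin
  rw [inner_sub_left, real_inner_self_eq_norm_sq] at this
  linarith

theorem inner_le_norm_proj_mul_norm {z : F} (hz : z ∈ C) : inner ℝ w z ≤ ‖p‖ * ‖z‖ := by
  have hvar := inner_sub_proj_sub_le_zero hC hp hmin hz
  have horth := inner_sub_proj_proj_eq_zero hC hcone hp hmin
  have hcs := real_inner_le_norm p z
  rw [inner_sub_right, inner_sub_left] at hvar
  linarith

end ProjectionOntoCone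

section GProjection

variable {A : Type*} [Fintype A] {G : Matrix A A ℝ}

theorem qform_nonneg (hG : G.PosDef) (w : A → ℝ) : 0 ≤ qform G w :=
  hG.posSemidef.dotProduct_mulVec_nonneg w

theorem continuous_qform_matrix (z : A → ℝ) : Continuous fun G : Matrix A A ℝ => qform G z :=
  continuous_const.dotProduct (continuous_id.matrix_mulVec continuous_const)

theorem inv_mulVec_dotProduct_mulVec [DecidableEq A] (hG : G.PosDef) (v z : A → ℝ) :
    (G⁻¹ *ᵥ v) ⬝ᵥ G *ᵥ z = v ⬝ᵥ z := by
  have hsymm : Gᵀ = G := by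
    simpa only [conjTranspose_eq_transpose_of_trivial] using hG.isHermitian.eq
  rw [dotProduct_mulVec, ← mulVec_transpose, hsymm, mulVec_mulVec,
    mul_nonsing_inv _ (isUnit_iff_ne_zero.2 hG.det_pos.ne'), one_mulVec]

theorem IsGProj.dotProduct_mulVec {C : Set (A → ℝ)} {w V : A → ℝ} (hG : G.PosDef)
    (hC : Convex ℝ C) (hcone : ∀ z ∈ C, ∀ t : ℝ, 0 ≤ t → t • z ∈ C) (h : IsGProj G C w V) :
    w ⬝ᵥ G *ᵥ V = qform G V ∧ ∀ z ∈ C, w ⬝ᵥ G *ᵥ z ≤ √(qform G V) * √(qform G z) := by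
  -- `A → ℝ` already carries the sup norm, so the `G`-norm structure is passed explicitly
  let N := G.toNormedAddCommGroup hG
  let I := G.toInnerProductSpace hG.posSemidef
  have hinner (x y : A → ℝ) : inner ℝ x y = x ⬝ᵥ G *ᵥ y := dotProduct_comm _ _
  have hnorm (x : A → ℝ) : @norm _ N.toNorm x = √(qform G x) := by
    rw [@norm_eq_sqrt_real_inner _ N.toSeminormedAddCommGroup I, hinner]; rfl
  have hmin : ∀ z ∈ C, @norm _ N.toNorm (w - V) ≤ @norm _ N.toNorm (w - z) := fun z hz => by
    simpa only [hnorm] using Real.sqrt_le_sqrt (h.2 z hz)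
  refine ⟨?_, fun z hz => ?_⟩
  · have := @inner_proj_eq_norm_sq _ N I _ _ _ hC hcone h.1 hmin
    rwa [hinner, hnorm, Real.sq_sqrt (qform_nonneg hG V)] at this
  · simpa only [hinner, hnorm] using
      @inner_le_norm_proj_mul_norm _ N I _ _ _ hC hcone h.1 hmin _ hz

end GProjection

section TangentCone

variable {A : Type*} [Fintype A]

theorem convex_tcone (x : A → ℝ) : Convex ℝ (tcone x) := by
  intro z hz z' hz' s t hs ht _
  refine ⟨?_, fun α hα => ?_⟩
  · simp only [Pi.add_apply, Pi.smul_apply, smul_eq_mul, Finset.sum_add_distrib,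
      ← Finset.mul_sum, hz.1, hz'.1, mul_zero, add_zero]
  · have := hz.2 α hα
    have := hz'.2 α hα
    simp only [Pi.add_apply, Pi.smul_apply, smul_eq_mul]
    positivity

theorem smul_mem_tcone {x z : A → ℝ} (hz : z ∈ tcone x) {t : ℝ} (ht : 0 ≤ t) :
    t • z ∈ tcone x := by
  refine ⟨?_, fun α hα => ?_⟩
  · simp only [Pi.smul_apply, smul_eq_mul, ← Finset.mul_sum, hz.1, mul_zero]
  · exact mul_nonneg ht (hz.2 α hα)

theorem tcone_subset_tcone {x y : A → ℝ} (h : ∀ α, y α = 0 → x α = 0) :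
    tcone x ⊆ tcone y :=
  fun _ hz => ⟨hz.1, fun α hα => hz.2 α (h α hα)⟩

theorem eventually_tcone_subset (x : A → ℝ) : ∀ᶠ y in 𝓝 x, tcone x ⊆ tcone y := by
  refine (eventually_all.2 fun α => ?_).mono fun y => tcone_subset_tcone
  by_cases hx : x α = 0
  · exact .of_forall fun _ _ => hx
  · exact ((continuous_apply α).continuousAt.eventually_ne hx).mono fun _ hy h => absurd h hy

end TangentCone

theorem ContinuousWithinAt.lowerSemicontinuousWithinAt_of_eventually_le {α γ : Type*}
    [TopologicalSpace α] [LinearOrder γ] [TopologicalSpace γ] [OrderTopology γ]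
    {f φ : α → γ} {s : Set α} {x : α} (hφ : ContinuousWithinAt φ s x) (hx : φ x = f x)
    (hle : φ ≤ᶠ[𝓝[s] x] f) : LowerSemicontinuousWithinAt f s x := fun c hc => by
  filter_upwards [hφ.eventually (eventually_gt_nhds (hx.symm ▸ hc : c < φ x)), hle]
    with y h₁ h₂ using h₁.trans_le h₂

theorem stmt_1_general {A : Type*} [Fintype A] [DecidableEq A]
    (g : (A → ℝ) → Matrix A A ℝ) (hgcont : ContinuousOn g (stdSimplex ℝ A))
    (hgpd : ∀ x ∈ stdSimplex ℝ A, (g x).PosDef)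
    (v : (A → ℝ) → (A → ℝ)) (hvcont : ContinuousOn v (stdSimplex ℝ A))
    (V : (A → ℝ) → (A → ℝ))
    (hV : ∀ x ∈ stdSimplex ℝ A, IsGProj (g x) (tcone x) ((g x)⁻¹.mulVec (v x)) (V x)) :
    LowerSemicontinuousOn (fun x => Real.sqrt (qform (g x) (V x))) (stdSimplex ℝ A) := by
  have hdual (y) (hy : y ∈ stdSimplex ℝ A) : v y ⬝ᵥ V y = qform (g y) (V y) ∧
      ∀ z ∈ tcone y, v y ⬝ᵥ z ≤ √(qform (g y) (V y)) * √(qform (g y) z) := by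
    simpa only [inv_mulVec_dotProduct_mulVec (hgpd y hy)] using
      (hV y hy).dotProduct_mulVec (hgpd y hy) (convex_tcone y) fun _ hz _ => smul_mem_tcone hz
  intro x hx
  rcases (qform_nonneg (hgpd x hx) (V x)).eq_or_lt with h0 | hpos
  · exact continuousWithinAt_const.lowerSemicontinuousWithinAt_of_eventually_le
      (by simp [← h0]) (.of_forall fun _ => Real.sqrt_nonneg _)
  refine ContinuousWithinAt.lowerSemicontinuousWithinAt_of_eventually_le
    (φ := fun y => v y ⬝ᵥ V x / √(qform (g y) (V x))) ?_ ?_ ?_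
  · have hq := ((continuous_qform_matrix (V x)).comp_continuousOn hgcont) x hx
    exact (((continuous_id.dotProduct continuous_const).comp_continuousOn hvcont) x hx).div
      (Real.continuous_sqrt.continuousAt.comp_continuousWithinAt hq) (Real.sqrt_pos.2 hpos).ne'
  · simp only [(hdual x hx).1, Real.div_sqrt]
  · filter_upwards [(eventually_tcone_subset x).filter_mono nhdsWithin_le_nhds,
      self_mem_nhdsWithin] with y hsub hy
    exact div_le_of_le_mul₀ (Real.sqrt_nonneg _) (Real.sqrt_nonneg _)
      ((hdual y hy).2 _ (hsub (hV x hx).1))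

/-- with `g` a continuous field of symmetric positive-definite matrices on the
simplex, `v` continuous, and `V(x)` the `g(x)`-projection of `g(x)⁻¹ v(x)` onto the tangent
cone `TC_X(x)`, the speed function `x ↦ ‖V(x)‖_{g(x)}` is lower semicontinuous on the simplex. -/
theorem stmt_1 {A : Type*} [Fintype A] [DecidableEq A] [Nonempty A]
    (g : (A → ℝ) → Matrix A A ℝ) (hgcont : ContinuousOn g (stdSimplex ℝ A))
    (hgpd : ∀ x ∈ stdSimplex ℝ A, (g x).PosDef)
    (v : (A → ℝ) → (A → ℝ)) (hvcont : ContinuousOn v (stdSimplex ℝ A))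
    (V : (A → ℝ) → (A → ℝ))
    (hV : ∀ x ∈ stdSimplex ℝ A, IsGProj (g x) (tcone x) ((g x)⁻¹.mulVec (v x)) (V x)) :
    LowerSemicontinuousOn (fun x => Real.sqrt (qform (g x) (V x))) (stdSimplex ℝ A) :=
  stmt_1_general g hgcont hgpd v hvcont V hV
end
end

section
/- Let X be the simplex in ℝ^A, let V : X → ℝ^A be bounded, and let x : [0,∞) → X be continuous with x(t) = x(0) + ∫₀ᵗ V(x(s)) ds for all t ≥ 0 (the integrand being locally integrable). Write Γ₊ = {x(t) : t ≥ 0} and RP = {y ∈ X : V(y) = 0}, and assume RP is closed. Suppose there exist L : X → ℝ and φ : X → [0,∞) such that: (i) L is continuously differentiable on an open set containing Γ₊ and continuous on X; (ii) φ is lower semicontinuous and φ(y) = 0 if and only if y ∈ RP; (iii) ∇L(y)·V(y) ≥ φ(y) for all y ∈ Γ₊. Then dist(x(t), RP) → 0 as t → ∞. -/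
/-!
Along the trajectory, `ψ(s) = L'(x s) (V (x s)) ≥ φ(x s) ≥ 0` is the rate of change of `L ∘ x`:
although `x` need not be differentiable, `L ∘ x - ∫ ψ` has zero right derivative, because `x` is
Lipschitz and `L'` is continuous along `x`. Since `L` is bounded on the compact simplex, `ψ` is
integrable on `[0, ∞)`, so its integrals over windows `[t, t + r]` tend to `0`. If `x t` were
`ε`-far from `RP` at arbitrarily late times, the Lipschitz bound would keep it `ε/2`-far on a whole
window of fixed length `r`, where the lower semicontinuous `φ` has a positive minimum `δ`, forcing
`∫ ψ ≥ δ r` on that window.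
-/

open Filter MeasureTheory Set Topology Asymptotics Metric
open scoped NNReal

section Primitive

variable {E : Type*} [NormedAddCommGroup E] [NormedSpace ℝ E] {x v : ℝ → E} {a : ℝ}

theorem sub_eq_integral_of_eq_primitive {t z : ℝ}
    (hxt : x t = x a + ∫ s in a..t, v s) (hxz : x z = x a + ∫ s in a..z, v s)
    (hvt : IntervalIntegrable v volume a t) (hvz : IntervalIntegrable v volume a z) :
    x z - x t = ∫ s in t..z, v s := by
  rw [hxt, hxz, add_sub_add_left_eq_sub, intervalIntegral.integral_interval_sub_left hvz hvt]

theorem lipschitzOnWith_of_eq_primitive {I : Set ℝ} {K : ℝ≥0} (hI : I.OrdConnected)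
    (hx : ∀ t ∈ I, x t = x a + ∫ s in a..t, v s)
    (hv : ∀ t ∈ I, IntervalIntegrable v volume a t) (hvK : ∀ s ∈ I, ‖v s‖ ≤ K) :
    LipschitzOnWith K x I := by
  refine LipschitzOnWith.of_dist_le_mul fun z hz t ht => ?_
  rw [dist_eq_norm, sub_eq_integral_of_eq_primitive (hx t ht) (hx z hz) (hv t ht) (hv z hz),
    Real.dist_eq]
  exact intervalIntegral.norm_integral_le_of_norm_le_const fun s hs =>
    hvK s (hI.uIcc_subset ht hz (uIoc_subset_uIcc hs))

theorem isLittleO_intervalIntegral_of_tendsto_zero {f : ℝ → E} {I : Set ℝ} (hI : I.OrdConnected)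
    {t : ℝ} (ht : t ∈ I) (hf : Tendsto f (𝓝[I] t) (𝓝 0)) :
    (fun z => ∫ s in t..z, f s) =o[𝓝[I] t] (fun z => z - t) := by
  refine isLittleO_iff.2 fun c hc => ?_
  obtain ⟨δ, hδ, hfδ⟩ := mem_nhdsWithin_iff.1 (hf (closedBall_mem_nhds 0 hc))
  filter_upwards [inter_mem_nhdsWithin I (ball_mem_nhds t hδ)] with z ⟨hz, hzt⟩
  refine intervalIntegral.norm_integral_le_of_norm_le_const fun s hs => ?_
  have hs' := uIoc_subset_uIcc hs
  have hst : dist s t < δ := by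
    rw [mem_ball, dist_comm] at hzt
    rw [dist_comm]
    exact (Real.dist_left_le_of_mem_uIcc hs').trans_lt hzt
  simpa using hfδ ⟨hst, hI.uIcc_subset ht hz hs'⟩

end Primitive

section ChainRule

variable {E F : Type*} [NormedAddCommGroup E] [NormedSpace ℝ E]
  [NormedAddCommGroup F] [NormedSpace ℝ F]

theorem IntervalIntegrable.continuousOn_apply {μ : Measure ℝ} [IsLocallyFiniteMeasure μ]
    {v : ℝ → E} {g : ℝ → E →L[ℝ] F} {a b : ℝ}
    (hv : IntervalIntegrable v μ a b) (hg : ContinuousOn g (uIcc a b)) :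
    IntervalIntegrable (fun s => g s (v s)) μ a b := by
  obtain ⟨C, hC⟩ := isCompact_uIcc.exists_bound_of_continuousOn hg
  exact intervalIntegrable_iff.2 <|
    (ContinuousLinearMap.id ℝ (E →L[ℝ] F)).integrable_of_bilin_of_bdd_left C
    ((hg.mono uIoc_subset_uIcc).aestronglyMeasurable measurableSet_uIoc)
    (ae_restrict_of_forall_mem measurableSet_uIoc fun s hs => hC s (uIoc_subset_uIcc hs))
    (intervalIntegrable_iff.1 hv)

variable [CompleteSpace E] [CompleteSpace F] {L : E → F} {L' : E → E →L[ℝ] F} {x v : ℝ → E}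
  {a b : ℝ} {K : ℝ≥0}

theorem hasDerivWithinAt_sub_integral_apply_of_eq_primitive {t : ℝ} (ht : t ∈ Icc a b)
    (hx : ∀ t ∈ Icc a b, x t = x a + ∫ s in a..t, v s) (hv : IntervalIntegrable v volume a b)
    (hvK : ∀ s ∈ Icc a b, ‖v s‖ ≤ K) (hL : HasFDerivAt L (L' (x t)) (x t))
    (hL'x : ContinuousOn (fun s => L' (x s)) (Icc a b)) :
    HasDerivWithinAt (fun z => L (x z) - ∫ s in a..z, L' (x s) (v s)) 0 (Icc a b) t := by
  have hv' : ∀ z ∈ Icc a b, IntervalIntegrable v volume a z := fun z hz =>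
    hv.mono_set (uIcc_subset_uIcc_left (uIcc_of_le (hz.1.trans hz.2) ▸ hz))
  have hxK : LipschitzOnWith K x (Icc a b) :=
    lipschitzOnWith_of_eq_primitive ordConnected_Icc hx hv' hvK
  have hlin : (fun z => L (x z) - L (x t) - L' (x t) (x z - x t)) =o[𝓝[Icc a b] t]
      (fun z => z - t) := by
    refine (hL.isLittleO.comp_tendsto (hxK.continuousOn t ht)).trans_isBigO ?_
    refine IsBigO.of_bound K (eventually_nhdsWithin_of_forall fun z hz => ?_)
    simpa only [Function.comp_apply, ← dist_eq_norm] using hxK.dist_le_mul z hz t ht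
  have hosc : Tendsto (fun s => (L' (x s) - L' (x t)) (v s)) (𝓝[Icc a b] t) (𝓝 0) := by
    refine squeeze_zero_norm' (eventually_nhdsWithin_of_forall fun s hs =>
      ((L' (x s) - L' (x t)).le_opNorm (v s)).trans
        (mul_le_mul_of_nonneg_left (hvK s hs) (norm_nonneg _))) ?_
    simpa using (((hL'x t ht).tendsto.sub_const (L' (x t))).norm.mul_const (K : ℝ))
  rw [hasDerivWithinAt_iff_isLittleO]
  refine (hlin.sub (isLittleO_intervalIntegral_of_tendsto_zero ordConnected_Icc ht hosc)).congr' ?_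
    EventuallyEq.rfl
  filter_upwards [self_mem_nhdsWithin] with z hz
  have hψ : ∀ c ∈ Icc a b, IntervalIntegrable (fun s => L' (x s) (v s)) volume a c := fun c hc =>
    (hv' c hc).continuousOn_apply (hL'x.mono (uIcc_subset_Icc ⟨le_rfl, hc.1.trans hc.2⟩ hc))
  have hvtz : IntervalIntegrable v volume t z := (hv' t ht).symm.trans (hv' z hz)
  have hosc_int : ∫ s in t..z, (L' (x s) - L' (x t)) (v s)
      = (∫ s in a..z, L' (x s) (v s)) - (∫ s in a..t, L' (x s) (v s)) - L' (x t) (x z - x t) := by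
    simp only [sub_apply]
    rw [intervalIntegral.integral_sub ((hψ t ht).symm.trans (hψ z hz))
        (hvtz.continuousOn_apply continuousOn_const), (L' (x t)).intervalIntegral_comp_comm hvtz,
      sub_eq_integral_of_eq_primitive (hx t ht) (hx z hz) (hv' t ht) (hv' z hz),
      intervalIntegral.integral_interval_sub_left (hψ z hz) (hψ t ht)]
  rw [hosc_int, smul_zero, sub_zero]
  abel

theorem integral_apply_eq_sub_of_eq_primitive (hab : a ≤ b)
    (hx : ∀ t ∈ Icc a b, x t = x a + ∫ s in a..t, v s) (hv : IntervalIntegrable v volume a b)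
    (hvK : ∀ s ∈ Icc a b, ‖v s‖ ≤ K) (hL : ∀ t ∈ Icc a b, HasFDerivAt L (L' (x t)) (x t))
    (hL'x : ContinuousOn (fun s => L' (x s)) (Icc a b)) :
    ∫ s in a..b, L' (x s) (v s) = L (x b) - L (x a) := by
  have hderiv := fun t ht =>
    hasDerivWithinAt_sub_integral_apply_of_eq_primitive ht hx hv hvK (hL t ht) hL'x
  have hconst := constant_of_has_deriv_right_zero (fun t ht => (hderiv t ht).continuousWithinAt)
    (fun t ht => ((hderiv t (Ico_subset_Icc_self ht)).mono
      (Icc_subset_Icc_left ht.1)).mono_of_mem_nhdsWithin (Icc_mem_nhdsGE ht.2)) b ⟨hab, le_rfl⟩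
  rw [intervalIntegral.integral_same, sub_zero] at hconst
  rw [← hconst]
  abel

end ChainRule

section Tail

variable {a : ℝ}

theorem integrableOn_Ioi_of_nonneg_of_intervalIntegral_le {f : ℝ → ℝ} (I : ℝ)
    (hf : ∀ s ∈ Ici a, 0 ≤ f s) (hfi : ∀ b ∈ Ici a, IntervalIntegrable f volume a b)
    (hfI : ∀ b ∈ Ici a, ∫ s in a..b, f s ≤ I) : IntegrableOn f (Ioi a) := by
  refine integrableOn_Ioi_of_intervalIntegral_norm_bounded I a (fun b => ?_) tendsto_id ?_
  · rcases le_total a b with hab | hba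
    · exact (intervalIntegrable_iff_integrableOn_Ioc_of_le hab).1 (hfi b hab)
    · simp [Ioc_eq_empty_of_le hba]
  · filter_upwards [eventually_ge_atTop a] with b hab
    rw [intervalIntegral.integral_congr fun s hs => Real.norm_of_nonneg (hf s ?_)]
    · exact hfI b hab
    · exact ((uIcc_of_le hab).subset hs).1

variable {E : Type*} [NormedAddCommGroup E] [NormedSpace ℝ E]

theorem tendsto_intervalIntegral_add_of_integrableOn_Ioi {f : ℝ → E}
    (hf : IntegrableOn f (Ioi a)) (r : ℝ) :
    Tendsto (fun t => ∫ s in t..t + r, f s) atTop (𝓝 0) := by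
  have hfi : ∀ b ∈ Ici a, IntervalIntegrable f volume a b := fun b hab =>
    (intervalIntegrable_iff_integrableOn_Ioc_of_le hab).2 (hf.mono_set Ioc_subset_Ioi_self)
  have hlim := ((intervalIntegral_tendsto_integral_Ioi a hf
    (tendsto_atTop_add_const_right _ r tendsto_id)).sub
    (intervalIntegral_tendsto_integral_Ioi a hf tendsto_id))
  rw [sub_self] at hlim
  refine hlim.congr' ?_
  filter_upwards [eventually_ge_atTop a, eventually_ge_atTop (a - r)] with t hat hart
  exact intervalIntegral.integral_interval_sub_left (hfi _ (show a ≤ t + r by linarith))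
    (hfi t hat)

end Tail

theorem IsCompact.exists_pos_forall_le_of_lowerSemicontinuousOn {α : Type*} [TopologicalSpace α]
    {f : α → ℝ} {K : Set α} (hK : IsCompact K) (hf : LowerSemicontinuousOn f K)
    (hpos : ∀ y ∈ K, 0 < f y) : ∃ δ > 0, ∀ y ∈ K, δ ≤ f y := by
  rcases K.eq_empty_or_nonempty with rfl | hne
  · exact ⟨1, one_pos, by simp⟩
  obtain ⟨y₀, hy₀, hmin⟩ := hf.exists_isMinOn hne hK
  exact ⟨f y₀, hpos y₀ hy₀, fun y hy => hmin hy⟩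

theorem tendsto_infDist_of_lipschitzOnWith_of_integrableOn {M : Type*} [PseudoMetricSpace M]
    {X R : Set M} {φ : M → ℝ} {y : ℝ → M} {ψ : ℝ → ℝ} {K : ℝ≥0} {a : ℝ} (hX : IsCompact X)
    (hφ : LowerSemicontinuousOn φ X) (hφR : ∀ z ∈ X, z ∉ R → 0 < φ z)
    (hyX : MapsTo y (Ici a) X) (hy : LipschitzOnWith K y (Ici a))
    (hψ : IntegrableOn ψ (Ioi a)) (hφψ : ∀ t ∈ Ici a, φ (y t) ≤ ψ t) :
    Tendsto (fun t => infDist (y t) R) atTop (𝓝 0) := by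
  refine Metric.tendsto_atTop.2 fun ε hε => ?_
  have hfar_closed : IsClosed {z | ε / 2 ≤ infDist z R} :=
    isClosed_le continuous_const (continuous_infDist_pt R)
  obtain ⟨δ, hδ, hφδ⟩ :=
    (hX.inter_right hfar_closed).exists_pos_forall_le_of_lowerSemicontinuousOn
      (hφ.mono inter_subset_left) fun z hz => hφR z hz.1 fun hzR => by
        linarith [show ε / 2 ≤ infDist z R from hz.2, infDist_zero_of_mem hzR]
  set r := ε / (2 * (K + 1))
  have hr : 0 < r := by positivity
  have hKr : K * r ≤ ε / 2 := by
    rw [mul_div_assoc', div_le_div_iff₀ (by positivity) two_pos]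
    nlinarith [K.coe_nonneg]
  obtain ⟨N, hN⟩ := eventually_atTop.1 ((tendsto_order.1
    (tendsto_intervalIntegral_add_of_integrableOn_Ioi hψ r)).2 (δ * r) (by positivity))
  refine ⟨max N a, fun t ht => ?_⟩
  have hat : a ≤ t := le_of_max_le_right ht
  rw [Real.dist_eq, sub_zero, abs_of_nonneg infDist_nonneg]
  by_contra! hfar
  have hδψ : ∀ s ∈ Icc t (t + r), δ ≤ ψ s := by
    intro s hs
    have has : a ≤ s := hat.trans hs.1
    have hdist : dist (y t) (y s) ≤ K * r := by
      refine (hy.dist_le_mul t hat s has).trans (mul_le_mul_of_nonneg_left ?_ K.coe_nonneg)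
      rw [Real.dist_eq, abs_sub_comm, abs_of_nonneg (by linarith [hs.1])]
      linarith [hs.2]
    have hfar_s : ε / 2 ≤ infDist (y s) R := by
      linarith [infDist_le_infDist_add_dist (x := y t) (y := y s) (s := R)]
    exact (hφδ (y s) ⟨hyX has, hfar_s⟩).trans (hφψ s has)
  have hψi : IntervalIntegrable ψ volume t (t + r) :=
    (intervalIntegrable_iff_integrableOn_Ioc_of_le (by linarith)).2
      (hψ.mono_set fun s hs => hat.trans_lt hs.1)
  have hlow := intervalIntegral.integral_mono_on (by linarith) intervalIntegrable_const hψi hδψ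
  rw [intervalIntegral.integral_const, smul_eq_mul, add_sub_cancel_left] at hlow
  linarith [hN t (le_of_max_le_left ht)]

theorem stmt_2_general {A : Type*} [Fintype A]
    (V : (A → ℝ) → (A → ℝ)) (hVbdd : ∃ B : ℝ, ∀ y ∈ stdSimplex ℝ A, ‖V y‖ ≤ B)
    (x : ℝ → (A → ℝ)) (hxX : ∀ t : ℝ, 0 ≤ t → x t ∈ stdSimplex ℝ A)
    (hloc : ∀ t : ℝ, 0 ≤ t → IntervalIntegrable (fun s => V (x s)) MeasureTheory.volume 0 t)
    (hsol : ∀ t : ℝ, 0 ≤ t → x t = x 0 + ∫ s in (0:ℝ)..t, V (x s))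
    (L : (A → ℝ) → ℝ) (φ : (A → ℝ) → ℝ)
    (hφnn : ∀ y ∈ stdSimplex ℝ A, 0 ≤ φ y)
    (U : Set (A → ℝ)) (hΓU : x '' Set.Ici 0 ⊆ U)
    (L' : (A → ℝ) → ((A → ℝ) →L[ℝ] ℝ))
    (hL' : ∀ y ∈ U, HasFDerivAt L (L' y) y)
    (hL'cont : ContinuousOn L' U)
    (hLcont : ContinuousOn L (stdSimplex ℝ A))
    (hφlsc : LowerSemicontinuousOn φ (stdSimplex ℝ A))
    (hφzero : ∀ y ∈ stdSimplex ℝ A, (φ y = 0 ↔ V y = 0))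
    (hLyap : ∀ y ∈ x '' Set.Ici 0, φ y ≤ L' y (V y)) :
    Tendsto (fun t => Metric.infDist (x t) {y ∈ stdSimplex ℝ A | V y = 0})
      atTop (nhds 0) := by
  obtain ⟨B, hB⟩ := hVbdd
  have hVK : ∀ s ∈ Ici (0 : ℝ), ‖V (x s)‖ ≤ B.toNNReal := fun s hs =>
    (hB _ (hxX s hs)).trans (Real.le_coe_toNNReal B)
  have hxU : MapsTo x (Ici 0) U := fun t ht => hΓU ⟨t, ht, rfl⟩
  have hxK : LipschitzOnWith B.toNNReal x (Ici 0) :=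
    lipschitzOnWith_of_eq_primitive ordConnected_Ici hsol hloc hVK
  have hL'x : ContinuousOn (fun s => L' (x s)) (Ici 0) := hL'cont.comp hxK.continuousOn hxU
  have hψ_int : ∀ T ∈ Ici (0 : ℝ), IntervalIntegrable (fun s => L' (x s) (V (x s))) volume 0 T :=
    fun T hT => (hloc T hT).continuousOn_apply
      (hL'x.mono fun s hs => (uIcc_of_le (mem_Ici.1 hT) ▸ hs).1)
  have hψ_eq : ∀ T ∈ Ici (0 : ℝ), ∫ s in 0..T, L' (x s) (V (x s)) = L (x T) - L (x 0) :=
    fun T hT => integral_apply_eq_sub_of_eq_primitive hT (fun t ht => hsol t ht.1) (hloc T hT)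
      (fun s hs => hVK s hs.1) (fun t ht => hL' _ (hxU ht.1)) (hL'x.mono Icc_subset_Ici_self)
  obtain ⟨yM, -, hyM⟩ := (isCompact_stdSimplex ℝ A).exists_isMaxOn ⟨x 0, hxX 0 le_rfl⟩ hLcont
  have hψ : IntegrableOn (fun s => L' (x s) (V (x s))) (Ioi 0) :=
    integrableOn_Ioi_of_nonneg_of_intervalIntegral_le (L yM - L (x 0))
      (fun s hs => (hφnn _ (hxX s hs)).trans (hLyap _ ⟨s, hs, rfl⟩)) hψ_int
      fun T hT => (hψ_eq T hT).trans_le (sub_le_sub_right (hyM (hxX T hT)) _)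
  exact tendsto_infDist_of_lipschitzOnWith_of_integrableOn (isCompact_stdSimplex ℝ A) hφlsc
    (fun y hy hyR => (hφnn y hy).lt_of_ne fun h => hyR ⟨hy, (hφzero y hy).1 h.symm⟩) hxX hxK hψ
    fun s hs => hLyap _ ⟨s, hs, rfl⟩

/-- Lyapunov convergence for (possibly discontinuous) dynamics on the simplex.
If `x(t) = x(0) + ∫₀ᵗ V(x(s)) ds` stays in the simplex, `V` is bounded, `RP = {V = 0}` is
closed, `L` is `C¹` on an open set containing the trajectory and continuous on the simplex,
`φ ≥ 0` is lower semicontinuous with `φ = 0` exactly on `RP`, and `∇L·V ≥ φ` along the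
trajectory, then `dist(x(t), RP) → 0`. -/
theorem stmt_2 {A : Type*} [Fintype A] [Nonempty A]
    (V : (A → ℝ) → (A → ℝ)) (hVbdd : ∃ B : ℝ, ∀ y ∈ stdSimplex ℝ A, ‖V y‖ ≤ B)
    (x : ℝ → (A → ℝ)) (hxX : ∀ t : ℝ, 0 ≤ t → x t ∈ stdSimplex ℝ A)
    (hxcont : ContinuousOn x (Set.Ici 0))
    (hloc : ∀ t : ℝ, 0 ≤ t → IntervalIntegrable (fun s => V (x s)) MeasureTheory.volume 0 t)
    (hsol : ∀ t : ℝ, 0 ≤ t → x t = x 0 + ∫ s in (0:ℝ)..t, V (x s))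
    (hRPclosed : IsClosed {y ∈ stdSimplex ℝ A | V y = 0})
    (L : (A → ℝ) → ℝ) (φ : (A → ℝ) → ℝ)
    (hφnn : ∀ y ∈ stdSimplex ℝ A, 0 ≤ φ y)
    (U : Set (A → ℝ)) (hU : IsOpen U) (hΓU : x '' Set.Ici 0 ⊆ U)
    (L' : (A → ℝ) → ((A → ℝ) →L[ℝ] ℝ))
    (hL' : ∀ y ∈ U, HasFDerivAt L (L' y) y)
    (hL'cont : ContinuousOn L' U)
    (hLcont : ContinuousOn L (stdSimplex ℝ A))
    (hφlsc : LowerSemicontinuousOn φ (stdSimplex ℝ A))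
    (hφzero : ∀ y ∈ stdSimplex ℝ A, (φ y = 0 ↔ V y = 0))
    (hLyap : ∀ y ∈ x '' Set.Ici 0, φ y ≤ L' y (V y)) :
    Tendsto (fun t => Metric.infDist (x t) {y ∈ stdSimplex ℝ A | V y = 0})
      atTop (nhds 0) :=
  stmt_2_general V hVbdd x hxX hloc hsol L φ hφnn U hΓU L' hL' hL'cont hLcont hφlsc hφzero hLyap
end

section
/- Let A be a finite nonempty set, G a symmetric positive-definite real matrix indexed by A, v ∈ ℝ^A, and C ⊆ ℝ^A a nonempty closed convex cone. Set w = G⁻¹ v and let V ∈ C satisfy ‖w − V‖_G ≤ ‖w − z‖_G for all z ∈ C (i.e., V is the G-projection of w onto C). Then ∑_α v_α V_α = ⟨w, V⟩_G ≥ ‖V‖_G² ≥ 0, and ∑_α v_α V_α = 0 if and only if V = 0. -/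
/-!
Along the ray through `V` the cone contains every `c • V` with `c ≥ 0`, and
`‖w - c • V‖_G² = ‖w‖_G² - 2c⟨w, V⟩_G + c²‖V‖_G²`. Minimality at `c = 1` over `c ≥ 0` forces
`⟨w, V⟩_G = ‖V‖_G²`, and `∑ v_α V_α = ⟨w, V⟩_G` because `G w = v` and `G` is symmetric.
Positive definiteness then gives the sign and the equality case.
-/

open Matrix

noncomputable section

theorem eq_of_isMinOn_sq_mul_sub_two_mul {a b : ℝ} (hb : 0 ≤ b)
    (h : IsMinOn (fun c : ℝ => c ^ 2 * b - 2 * c * a) (Set.Ici 0) 1) : a = b := by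
  have key (c : ℝ) (hc : 0 ≤ c) : b - 2 * a ≤ c ^ 2 * b - 2 * c * a := by
    simpa using h (Set.mem_Ici.mpr hc)
  rcases le_or_gt a 0 with ha | ha
  · linarith [key 0 le_rfl]
  · have hb0 : 0 < b := by
      by_contra! hb0
      linarith [key 2 zero_le_two]
    -- the unconstrained minimizer `a / b` is admissible, and the value there is `-a² / b`
    have := key (a / b) (div_nonneg ha.le hb)
    field_simp at this
    nlinarith

namespace Matrix

theorem IsHermitian.isSymm_of_real {A : Type*} {G : Matrix A A ℝ} (hG : G.IsHermitian) :
    G.IsSymm :=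
  (conjTranspose_eq_transpose_of_trivial G).symm.trans hG

variable {A : Type*} [Fintype A] {G : Matrix A A ℝ}

theorem IsSymm.dotProduct_mulVec_comm (hG : G.IsSymm) (x y : A → ℝ) :
    x ⬝ᵥ G *ᵥ y = y ⬝ᵥ G *ᵥ x := by
  rw [dotProduct_mulVec, ← mulVec_transpose, hG.eq, dotProduct_comm]

theorem IsSymm.qform_sub_smul (hG : G.IsSymm) (w V : A → ℝ) (c : ℝ) :
    qform G (w - c • V) = qform G w - 2 * c * (w ⬝ᵥ G *ᵥ V) + c ^ 2 * qform G V := by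
  simp only [qform, mulVec_sub, sub_dotProduct, dotProduct_sub, mulVec_smul, smul_dotProduct,
    dotProduct_smul, smul_eq_mul]
  linear_combination (-c) * hG.dotProduct_mulVec_comm V w

theorem PosSemidef.qform_nonneg (hG : G.PosSemidef) (x : A → ℝ) : 0 ≤ qform G x :=
  hG.dotProduct_mulVec_nonneg x

theorem PosDef.qform_eq_zero_iff (hG : G.PosDef) {x : A → ℝ} : qform G x = 0 ↔ x = 0 := by
  refine ⟨fun h => ?_, fun h => by simp [qform, h]⟩
  by_contra hx
  exact (hG.dotProduct_mulVec_pos hx).ne' h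

end Matrix

theorem IsGProj.dotProduct_mulVec_eq_qform_of_smul_mem {A : Type*} [Fintype A]
    {G : Matrix A A ℝ} {C : Set (A → ℝ)} {w V : A → ℝ}
    (hG : G.PosSemidef) (hC : ∀ c : ℝ, 0 ≤ c → ∀ z ∈ C, c • z ∈ C) (hV : IsGProj G C w V) :
    w ⬝ᵥ G *ᵥ V = qform G V := by
  have hsub := hG.1.isSymm_of_real.qform_sub_smul w V
  refine eq_of_isMinOn_sq_mul_sub_two_mul (hG.qform_nonneg V) fun c hc => ?_
  have hmin := hV.2 (c • V) (hC c hc V hV.1)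
  have hsub_one := hsub 1
  rw [one_smul] at hsub_one
  rw [hsub, hsub_one] at hmin
  simp only [Set.mem_ofPred_eq]
  linarith

theorem stmt_3_general {A : Type*} [Fintype A] [DecidableEq A]
    (G : Matrix A A ℝ) (hG : G.PosDef) (v : A → ℝ)
    (C : Set (A → ℝ))
    (hCcone : ∀ c : ℝ, 0 ≤ c → ∀ z ∈ C, c • z ∈ C)
    (V : A → ℝ) (hV : IsGProj G C (G⁻¹.mulVec v) V) :
    v ⬝ᵥ V = (G⁻¹.mulVec v) ⬝ᵥ G.mulVec V ∧
    qform G V ≤ (G⁻¹.mulVec v) ⬝ᵥ G.mulVec V ∧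
    0 ≤ qform G V ∧
    (v ⬝ᵥ V = 0 ↔ V = 0) := by
  have hv : v ⬝ᵥ V = (G⁻¹ *ᵥ v) ⬝ᵥ G *ᵥ V := by
    rw [hG.1.isSymm_of_real.dotProduct_mulVec_comm, mulVec_mulVec,
      mul_nonsing_inv _ ((isUnit_iff_isUnit_det G).mp hG.isUnit), one_mulVec, dotProduct_comm]
  have hproj := hV.dotProduct_mulVec_eq_qform_of_smul_mem hG.posSemidef hCcone
  refine ⟨hv, hproj.ge, hG.posSemidef.qform_nonneg V, ?_⟩
  rw [hv, hproj, hG.qform_eq_zero_iff]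

/-- positive correlation.  If `G` is symmetric positive definite, `C` a nonempty
closed convex cone, `w = G⁻¹ v` and `V` the `G`-projection of `w` onto `C`, then
`∑ v_α V_α = ⟨w, V⟩_G ≥ ‖V‖_G² ≥ 0`, with `∑ v_α V_α = 0` iff `V = 0`. -/
theorem stmt_3 {A : Type*} [Fintype A] [DecidableEq A] [Nonempty A]
    (G : Matrix A A ℝ) (hG : G.PosDef) (v : A → ℝ)
    (C : Set (A → ℝ)) (hCne : C.Nonempty) (hCclosed : IsClosed C)
    (hCconv : Convex ℝ C) (hCcone : ∀ c : ℝ, 0 ≤ c → ∀ z ∈ C, c • z ∈ C)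
    (V : A → ℝ) (hV : IsGProj G C (G⁻¹.mulVec v) V) :
    v ⬝ᵥ V = (G⁻¹.mulVec v) ⬝ᵥ G.mulVec V ∧
    qform G V ≤ (G⁻¹.mulVec v) ⬝ᵥ G.mulVec V ∧
    0 ≤ qform G V ∧
    (v ⬝ᵥ V = 0 ↔ V = 0) :=
  stmt_3_general G hG v C hCcone V hV
end
end

section
/- Let A be a finite nonempty set, X the simplex in ℝ^A, x ∈ X, and S = supp(x). Let M be a symmetric matrix indexed by A with M_{αβ} = 0 unless both α, β ∈ S, and with zᵀ M z > 0 for every nonzero z ∈ ℝ^S = {z : z_α = 0 for α ∉ S}. Given v ∈ ℝ^A, set n = M·𝟙 (where 𝟙 is the all-ones vector), w = M·v, and V = w − (∑_β w_β / ∑_β n_β) · n. Then ∑_β n_β > 0, and V = 0 if and only if v_α = v_β for all α, β ∈ S (i.e., x is a restricted equilibrium of v). -/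
open Matrix

noncomputable section

/-- restricted stationarity in coordinate form.  Let `x` lie in the simplex with
support `S = supp(x)`, and let `M` be a symmetric matrix vanishing off `S × S` and positive
definite on `ℝ^S`.  With `n = M 𝟙` and `w = M v`, one has `∑ n_β > 0`, and
`w − (∑ w_β / ∑ n_β) n = 0` iff all payoffs `v_α` for `α ∈ S` coincide. -/
theorem stmt_5 {A : Type*} [Fintype A] [DecidableEq A] [Nonempty A]
    (x : A → ℝ) (hx : x ∈ stdSimplex ℝ A)
    (M : Matrix A A ℝ) (hMsymm : M.IsSymm)
    (hMoff : ∀ α β : A, (x α = 0 ∨ x β = 0) → M α β = 0)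
    (hMpos : ∀ z : A → ℝ, z ≠ 0 → (∀ α, x α = 0 → z α = 0) → 0 < z ⬝ᵥ M.mulVec z)
    (v : A → ℝ) :
    0 < (∑ β, M.mulVec 1 β) ∧
    (M.mulVec v - ((∑ β, M.mulVec v β) / (∑ β, M.mulVec 1 β)) • M.mulVec 1 = 0 ↔
      ∀ α β : A, x α ≠ 0 → x β ≠ 0 → v α = v β) := by
  classical
  obtain ⟨hx0, hx1⟩ := hx
  -- there is a point in the support
  have hsupp : ∃ α, x α ≠ 0 := by
    by_contra h
    push_neg at h
    simp [h] at hx1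
  obtain ⟨α₀, hα₀⟩ := hsupp
  set χ : A → ℝ := fun α => if x α = 0 then 0 else 1 with hχ
  have hχne : χ ≠ 0 := by
    intro h
    have := congrFun h α₀
    simp [hχ, hα₀] at this
  have hχsupp : ∀ α, x α = 0 → χ α = 0 := by
    intro α h; simp [hχ, h]
  -- sum of n equals χ M χ
  have hsum : (∑ β, M.mulVec 1 β) = χ ⬝ᵥ M.mulVec χ := by
    have key : ∀ β γ : A, M β γ = χ β * (M β γ * χ γ) := by
      intro β γ
      by_cases hβ : x β = 0
      · simp [hχ, hβ, hMoff β γ (Or.inl hβ)]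
      · by_cases hγ : x γ = 0
        · simp [hχ, hγ, hMoff β γ (Or.inr hγ)]
        · simp [hχ, hβ, hγ]
    calc (∑ β, M.mulVec 1 β) = ∑ β, ∑ γ, M β γ := by
            simp [mulVec, dotProduct]
      _ = ∑ β, ∑ γ, χ β * (M β γ * χ γ) := by
            exact Finset.sum_congr rfl fun β _ => Finset.sum_congr rfl fun γ _ => key β γ
      _ = χ ⬝ᵥ M.mulVec χ := by
            simp [dotProduct, mulVec, Finset.mul_sum]
  have hpos : 0 < (∑ β, M.mulVec 1 β) := by
    rw [hsum]; exact hMpos χ hχne hχsupp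
  refine ⟨hpos, ?_⟩
  set c : ℝ := (∑ β, M.mulVec v β) / (∑ β, M.mulVec 1 β) with hc
  constructor
  · -- forward
    intro hV
    have hVpt : ∀ β, M.mulVec v β = c * M.mulVec 1 β := by
      intro β
      have := congrFun hV β
      simp at this
      linarith [this]
    set z : A → ℝ := fun α => if x α = 0 then 0 else v α - c with hz
    have hzsupp : ∀ α, x α = 0 → z α = 0 := by intro α h; simp [hz, h]
    have hMz : ∀ β, M.mulVec z β = 0 := by
      intro β
      have : M.mulVec z β = ∑ γ, M β γ * (v γ - c) := by
        simp only [mulVec, dotProduct]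
        apply Finset.sum_congr rfl
        intro γ _
        by_cases hγ : x γ = 0
        · simp [hz, hγ, hMoff β γ (Or.inr hγ)]
        · simp [hz, hγ]
      rw [this]
      have h2 : ∑ γ, M β γ * (v γ - c) = M.mulVec v β - c * M.mulVec 1 β := by
        simp only [mulVec, dotProduct, Pi.one_apply, mul_sub, mul_one,
          Finset.sum_sub_distrib, Finset.mul_sum]
        congr 1
        exact Finset.sum_congr rfl fun γ _ => mul_comm _ _
      rw [h2, hVpt β]; ring
    have hzero : z = 0 := by
      by_contra hne
      have := hMpos z hne hzsupp
      have h0 : z ⬝ᵥ M.mulVec z = 0 := by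
        simp only [dotProduct]
        apply Finset.sum_eq_zero
        intro β _
        rw [hMz β]; ring
      rw [h0] at this; exact lt_irrefl 0 this
    intro α β hα hβ
    have hαc : v α = c := by
      have := congrFun hzero α
      simp [hz, hα] at this
      linarith
    have hβc : v β = c := by
      have := congrFun hzero β
      simp [hz, hβ] at this
      linarith
    rw [hαc, hβc]
  · -- backward
    intro heq
    have hvc : ∀ α, x α ≠ 0 → v α = v α₀ := fun α hα => heq α α₀ hα hα₀
    have hw : ∀ β, M.mulVec v β = v α₀ * M.mulVec 1 β := by
      intro β
      simp only [mulVec, dotProduct, Pi.one_apply, Finset.mul_sum]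
      apply Finset.sum_congr rfl
      intro γ _
      by_cases hγ : x γ = 0
      · simp [hMoff β γ (Or.inr hγ)]
      · rw [hvc γ hγ]; ring
    have hcval : c = v α₀ := by
      rw [hc]
      have : (∑ β, M.mulVec v β) = v α₀ * ∑ β, M.mulVec 1 β := by
        rw [Finset.mul_sum]
        exact Finset.sum_congr rfl fun β _ => hw β
      rw [this, mul_div_assoc, div_self (ne_of_gt hpos), mul_one]
    funext β
    simp only [Pi.sub_apply, Pi.smul_apply, smul_eq_mul, Pi.zero_apply]
    rw [hw β, hcval]; ring
end
end

section
/- Let U ⊆ ℝ^A be open, h : U → ℝ twice continuously differentiable, x* ∈ U, and let x : I → U be a curve differentiable at t ∈ I. Then the map s ↦ D_h(x*, x(s)) is differentiable at t with derivative (x(t) − x*)ᵀ · Hess h(x(t)) · x'(t), where Hess h(x(t)) is the Hessian matrix of h at x(t). -/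
open Matrix

noncomputable section

/-! Along the curve, the two first-order terms `∓ ∇h(x)·x'` of `D_h(x*, x(s))` cancel, leaving
`Hess h(x)(x', x − x*)`; symmetry of the Hessian of a `C²` function and expansion of the bilinear
form in the standard basis give the stated matrix expression. -/

theorem ContinuousLinearMap.apply_apply_eq_dotProduct_mulVec {A : Type*} [Fintype A]
    [DecidableEq A] {R : Type*} [NormedField R]
    (B : (A → R) →L[R] (A → R) →L[R] R) (v w : A → R) :
    B v w = v ⬝ᵥ (Matrix.of fun α β => B (Pi.single α 1) (Pi.single β 1)) *ᵥ w := by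
  have hmatrix : LinearMap.toMatrix₂' R B.toLinearMap₁₂ =
      Matrix.of fun α β => B (Pi.single α 1) (Pi.single β 1) := by
    ext α β
    exact LinearMap.toMatrix₂'_apply _ α β
  rw [← hmatrix, ← Matrix.toLinearMap₂'_apply', Matrix.toLinearMap₂'_toMatrix']
  rfl

/-- Where `h` is not differentiable at `y`, `fderiv` is junk `0` and this is not `D_h(x*, y)`. -/
def bregmanDiv {E : Type*} [NormedAddCommGroup E] [NormedSpace ℝ E] (h : E → ℝ) (xstar y : E) :
    ℝ :=
  h xstar - h y - fderiv ℝ h y (xstar - y)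

theorem HasDerivAt.bregmanDiv_comp {E : Type*} [NormedAddCommGroup E] [NormedSpace ℝ E]
    {h : E → ℝ} {xstar : E} {x : ℝ → E} {x' : E} {t : ℝ}
    (hdiff : DifferentiableAt ℝ h (x t)) (hdiff2 : DifferentiableAt ℝ (fderiv ℝ h) (x t))
    (hx : HasDerivAt x x' t) :
    HasDerivAt (fun s => bregmanDiv h xstar (x s))
      (fderiv ℝ (fderiv ℝ h) (x t) x' (x t - xstar)) t := by
  have hh : HasDerivAt (fun s => h (x s)) (fderiv ℝ h (x t) x') t :=
    hdiff.hasFDerivAt.comp_hasDerivAt t hx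
  have hgrad : HasDerivAt (fun s => fderiv ℝ h (x s) (xstar - x s))
      (fderiv ℝ (fderiv ℝ h) (x t) x' (xstar - x t) + fderiv ℝ h (x t) (0 - x')) t :=
    (hdiff2.hasFDerivAt.comp_hasDerivAt t hx).clm_apply ((hasDerivAt_const t xstar).sub hx)
  refine (((hasDerivAt_const t (h xstar)).sub hh).sub hgrad).congr_deriv ?_
  simp only [map_sub, map_zero]
  abel

theorem stmt_7_general {A : Type*} [Fintype A] [DecidableEq A]
    (U : Set (A → ℝ)) (hU : IsOpen U)
    (h : (A → ℝ) → ℝ) (hh : ContDiffOn ℝ 2 h U)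
    (xstar : A → ℝ)
    (x : ℝ → (A → ℝ)) (hxU : ∀ s : ℝ, x s ∈ U)
    (t : ℝ) (x' : A → ℝ) (hx : HasDerivAt x x' t) :
    HasDerivAt (fun s => h xstar - h (x s) - fderiv ℝ h (x s) (xstar - x s))
      ((x t - xstar) ⬝ᵥ
        (Matrix.of fun α β =>
          fderiv ℝ (fderiv ℝ h) (x t) (Pi.single α 1) (Pi.single β 1)).mulVec x') t := by
  have hC2 : ContDiffAt ℝ 2 h (x t) := hh.contDiffAt (hU.mem_nhds (hxU t))
  have hdiff2 : DifferentiableAt ℝ (fderiv ℝ h) (x t) :=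
    (hC2.fderiv_right (m := 1) le_rfl).differentiableAt one_ne_zero
  rw [← ContinuousLinearMap.apply_apply_eq_dotProduct_mulVec,
    hC2.isSymmSndFDerivAt (by simp)]
  exact hx.bregmanDiv_comp (hC2.differentiableAt two_ne_zero) hdiff2

/-- radial derivative of the Bregman divergence.  If `h` is `C²` on an open set
`U`, `x* ∈ U`, and `x` is a curve in `U` differentiable at `t` with velocity `x'`, then
`s ↦ D_h(x*, x(s)) = h(x*) − h(x(s)) − ∇h(x(s))·(x* − x(s))` is differentiable at `t` with
derivative `(x(t) − x*)ᵀ · Hess h(x(t)) · x'`. -/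
theorem stmt_7 {A : Type*} [Fintype A] [DecidableEq A] [Nonempty A]
    (U : Set (A → ℝ)) (hU : IsOpen U)
    (h : (A → ℝ) → ℝ) (hh : ContDiffOn ℝ 2 h U)
    (xstar : A → ℝ) (hxstar : xstar ∈ U)
    (x : ℝ → (A → ℝ)) (hxU : ∀ s : ℝ, x s ∈ U)
    (t : ℝ) (x' : A → ℝ) (hx : HasDerivAt x x' t) :
    HasDerivAt (fun s => h xstar - h (x s) - fderiv ℝ h (x s) (xstar - x s))
      ((x t - xstar) ⬝ᵥ
        (Matrix.of fun α β =>
          fderiv ℝ (fderiv ℝ h) (x t) (Pi.single α 1) (Pi.single β 1)).mulVec x') t :=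
  stmt_7_general U hU h hh xstar x hxU t x' hx
end
end
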